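/- Near-Markov property of ECF partial quotients: for every positive integer j, P(b_1 = j) = 1/(j(j+1)); and for all integers k ≥ j ≥ 1 and all n ≥ 1, j/(k(k+2)) ≤ P(b_{n+1} = k | b_n = j) ≤ (j+1)/(k(k+1)), where P(b_{n+1} = k | b_n = j) = P({b_{n+1} = k} ∩ {b_n = j}) / P(b_n = j). -/

import Mathlib

open MeasureTheory Set

/-- The Engel continued fraction map, with the convention `T_E 0 = 0`. -/
noncomputable def ecfT (x : ℝ) : ℝ :=
  if x = 0 then 0 else (1 / (⌊1 / x⌋ : ℝ)) * (1 / x - (⌊1 / x⌋ : ℝ))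

/-- The `n`-th partial quotient of the ECF expansion (`n ≥ 1`). -/
noncomputable def ecfB (n : ℕ) (x : ℝ) : ℤ := ⌊1 / (ecfT^[n - 1] x)⌋

/-- Lebesgue measure on `(0,1]`. -/
noncomputable def ecfP : Measure ℝ := volume.restrict (Set.Ioc 0 1)

open scoped ENNReal

/-!
The law of `ecfT^[n]` under `ecfP` is a countable sum of measures with density
`c / (C t + D)²` on `(0, 1/b)`, where `b ≥ 1`, `C ≥ 0`, `D > 0`. Indeed, on the branch
`{⌊1/y⌋ = j}` the map `ecfT` is inverted by `t ↦ 1/(j(1+t))`, which carries such a density to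
one of the same shape, now on `(0, 1/j)`.

The event `{b₁ = j}` is the interval `(1/(j+1), 1/j]`, and `{b₁ = j, b₂ = k}` is, up to an
endpoint, the interval `[k/(j(k+1)), (k+1)/(j(k+2)))`. Under a single such density both masses
are explicit rational functions of `C` and `D`, and their ratio lies between `j/(k(k+2))` and
`(j+1)/(k(k+1))`. These bounds, written multiplicatively, survive countable sums. Finally,
`P(b_n = j) > 0` follows by induction on `n` from the lower bound applied with `b_n = 1`.
-/

lemma measurable_ecfT : Measurable ecfT := by
  have h_floor : Measurable fun x : ℝ ↦ ((⌊1 / x⌋ : ℤ) : ℝ) :=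
    measurable_from_top.comp (Int.measurable_floor.comp (measurable_const.div measurable_id))
  exact Measurable.ite (measurableSet_singleton 0) measurable_const
    ((measurable_const.div h_floor).mul ((measurable_const.div measurable_id).sub h_floor))

lemma measurable_ecfB (n : ℕ) : Measurable (ecfB n) :=
  Int.measurable_floor.comp (measurable_const.div (measurable_ecfT.iterate _))

lemma measurableSet_setOf_ecfB (n : ℕ) (j : ℤ) : MeasurableSet {x | ecfB n x = j} :=
  measurable_ecfB n (measurableSet_singleton j)

lemma floor_one_div_eq_iff {j : ℕ} (hj : 1 ≤ j) {y : ℝ} :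
    ⌊1 / y⌋ = j ↔ y ∈ Ioc (1 / ((j : ℝ) + 1)) (1 / j) := by
  have hj0 : (0 : ℝ) < j := by exact_mod_cast hj
  rw [Int.floor_eq_iff, Int.cast_natCast]
  constructor
  · rintro ⟨hle, hlt⟩
    have hy : 0 < y := one_div_pos.mp (hj0.trans_le hle)
    exact ⟨(one_div_lt hy (by positivity)).1 hlt, (le_one_div hj0 hy).1 hle⟩
  · rintro ⟨hlt, hle⟩
    have hy : 0 < y := (by positivity : (0 : ℝ) < 1 / (j + 1)).trans hlt
    exact ⟨(le_one_div hj0 hy).2 hle, (one_div_lt hy (by positivity)).2 hlt⟩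

lemma setOf_natFloor_one_div_eq {j : ℕ} (hj : 1 ≤ j) :
    {y : ℝ | ⌊1 / y⌋₊ = j} = Ioc (1 / ((j : ℝ) + 1)) (1 / j) := by
  ext y
  rw [mem_ofPred_eq, ← Int.floor_toNat, ← floor_one_div_eq_iff hj]
  omega

lemma ecfT_of_floor_eq {j : ℕ} (hj : 1 ≤ j) {y : ℝ} (hy : ⌊1 / y⌋ = j) :
    ecfT y = 1 / (j * y) - 1 := by
  have hy0 : y ≠ 0 := by rintro rfl; simp at hy; omega
  have hj0 : (j : ℝ) ≠ 0 := by positivity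
  rw [ecfT, if_neg hy0, hy, Int.cast_natCast]
  field_simp

lemma ecfB_add_iterate {n : ℕ} (hn : 1 ≤ n) (m : ℕ) (x : ℝ) :
    ecfB (n + m) x = ecfB n (ecfT^[m] x) := by
  rw [ecfB, ecfB, ← Function.iterate_add_apply, show n + m - 1 = n - 1 + m by omega]

lemma setOf_ecfB_add_eq_preimage (m : ℕ) {n : ℕ} (hn : 1 ≤ n) (j : ℤ) :
    {x | ecfB (n + m) x = j} = ecfT^[m] ⁻¹' {y | ecfB n y = j} := by
  ext x
  simp only [mem_ofPred_eq, mem_preimage, ecfB_add_iterate hn]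

lemma setOf_ecfB_one_eq {j : ℕ} (hj : 1 ≤ j) :
    {y | ecfB 1 y = j} = Ioc (1 / ((j : ℝ) + 1)) (1 / j) :=
  ext fun _ ↦ floor_one_div_eq_iff hj

lemma one_div_mul_sub_one_mem_Ioc_iff {j k : ℕ} (hj : 1 ≤ j) (hk : 1 ≤ k) {y : ℝ} (hy : 0 < y) :
    1 / (j * y) - 1 ∈ Ioc (1 / ((k : ℝ) + 1)) (1 / k) ↔
      y ∈ Ico ((k : ℝ) / (j * (k + 1))) ((k + 1) / (j * (k + 2))) := by
  have hj0 : (0 : ℝ) < j := by exact_mod_cast hj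
  have hk0 : (0 : ℝ) < k := by exact_mod_cast hk
  simp only [mem_Ioc, mem_Ico, lt_sub_iff_add_lt, sub_le_iff_le_add]
  rw [div_add_one (by positivity), div_add_one hk0.ne', div_lt_div_iff₀ (by positivity)
    (by positivity), div_le_div_iff₀ (by positivity) hk0, div_le_iff₀ (by positivity),
    lt_div_iff₀ (by positivity)]
  constructor <;> rintro ⟨h1, h2⟩ <;> constructor <;> nlinarith

lemma ecfB_two_eq_iff {j k : ℕ} (hj : 1 ≤ j) (hk : 1 ≤ k) {y : ℝ} (hy : ecfB 1 y = j) :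
    ecfB 2 y = k ↔ y ∈ Ico ((k : ℝ) / (j * (k + 1))) ((k + 1) / (j * (k + 2))) := by
  change ⌊1 / y⌋ = j at hy
  have hy0 : 0 < y :=
    (by positivity : (0 : ℝ) < 1 / (j + 1)).trans ((floor_one_div_eq_iff hj).1 hy).1
  change ⌊1 / ecfT y⌋ = k ↔ _
  rw [ecfT_of_floor_eq hj hy, floor_one_div_eq_iff hk, one_div_mul_sub_one_mem_Ioc_iff hj hk hy0]

lemma Ioo_subset_setOf_ecfB_two_inter {j k : ℕ} (hj : 1 ≤ j) (hjk : j ≤ k) :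
    Ioo ((k : ℝ) / (j * (k + 1))) ((k + 1) / (j * (k + 2))) ⊆
      {y | ecfB 2 y = k} ∩ {y | ecfB 1 y = j} := by
  have hj0 : (0 : ℝ) < j := by exact_mod_cast hj
  have hjk' : (j : ℝ) ≤ k := by exact_mod_cast hjk
  intro y hy
  have hjy : ecfB 1 y = j := by
    change ⌊1 / y⌋ = j
    rw [floor_one_div_eq_iff hj]
    refine ⟨lt_of_le_of_lt ?_ hy.1, hy.2.le.trans ?_⟩
    · rw [div_le_div_iff₀ (by positivity) (by positivity)]; nlinarith
    · rw [div_le_div_iff₀ (by positivity) hj0]; nlinarith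
  exact ⟨(ecfB_two_eq_iff hj (hj.trans hjk) hjy).2 (Ioo_subset_Ico_self hy), hjy⟩

lemma setOf_ecfB_two_inter_subset {j k : ℕ} (hj : 1 ≤ j) (hk : 1 ≤ k) :
    {y | ecfB 2 y = k} ∩ {y | ecfB 1 y = j} ⊆
      Icc ((k : ℝ) / (j * (k + 1))) ((k + 1) / (j * (k + 2))) :=
  fun _ ⟨hky, hjy⟩ ↦ Ico_subset_Icc_self ((ecfB_two_eq_iff hj hk hjy).1 hky)

noncomputable def ecfBranch (j : ℕ) (t : ℝ) : ℝ := 1 / (j * (1 + t))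

section Branch

variable {j : ℕ}

lemma mapsTo_ecfBranch (hj : 1 ≤ j) :
    MapsTo (ecfBranch j) (Ioo 0 (1 / j)) (Ioo (1 / ((j : ℝ) + 1)) (1 / j)) := by
  rintro t ⟨ht0, ht1⟩
  have hj0 : (0 : ℝ) < j := by exact_mod_cast hj
  rw [lt_div_iff₀ hj0] at ht1
  exact ⟨one_div_lt_one_div_of_lt (by positivity) (by nlinarith),
    one_div_lt_one_div_of_lt hj0 (by nlinarith)⟩

lemma mapsTo_ecfT (hj : 1 ≤ j) :
    MapsTo ecfT (Ioo (1 / ((j : ℝ) + 1)) (1 / j)) (Ioo 0 (1 / j)) := by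
  intro y hy
  have hj0 : (0 : ℝ) < j := by exact_mod_cast hj
  have hy0 : 0 < y := (by positivity : (0 : ℝ) < 1 / (j + 1)).trans hy.1
  rw [ecfT_of_floor_eq hj ((floor_one_div_eq_iff hj).2 (Ioo_subset_Ioc_self hy))]
  obtain ⟨hlo, hhi⟩ := hy
  rw [div_lt_iff₀ (by positivity)] at hlo
  rw [lt_div_iff₀ hj0] at hhi
  constructor
  · rw [sub_pos, lt_div_iff₀ (by positivity)]; linarith
  · rw [sub_lt_iff_lt_add, div_lt_iff₀ (by positivity)]
    field_simp
    nlinarith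

lemma invOn_ecfT_ecfBranch (hj : 1 ≤ j) :
    InvOn ecfT (ecfBranch j) (Ioo 0 (1 / j)) (Ioo (1 / ((j : ℝ) + 1)) (1 / j)) := by
  have hj0 : (0 : ℝ) < j := by exact_mod_cast hj
  constructor
  · intro t ht
    have hfloor := (floor_one_div_eq_iff hj).2 (Ioo_subset_Ioc_self (mapsTo_ecfBranch hj ht))
    rw [ecfT_of_floor_eq hj hfloor, ecfBranch]
    have : 0 < 1 + t := by linarith [ht.1]
    field_simp
    ring
  · intro y hy
    have hy0 : 0 < y := (by positivity : (0 : ℝ) < 1 / (j + 1)).trans hy.1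
    rw [ecfT_of_floor_eq hj ((floor_one_div_eq_iff hj).2 (Ioo_subset_Ioc_self hy)), ecfBranch]
    field_simp
    ring

lemma bijOn_ecfBranch (hj : 1 ≤ j) :
    BijOn (ecfBranch j) (Ioo 0 (1 / j)) (Ioo (1 / ((j : ℝ) + 1)) (1 / j)) :=
  (invOn_ecfT_ecfBranch hj).bijOn (mapsTo_ecfBranch hj) (mapsTo_ecfT hj)

lemma hasDerivAt_ecfBranch (hj : 1 ≤ j) {t : ℝ} (ht : 1 + t ≠ 0) :
    HasDerivAt (ecfBranch j) (-(1 / (j * (1 + t) ^ 2))) t := by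
  have hj0 : (j : ℝ) ≠ 0 := by positivity
  have h := (((hasDerivAt_id t).const_add 1).const_mul (j : ℝ)).inv (mul_ne_zero hj0 ht)
  rw [show ecfBranch j = fun s ↦ ((j : ℝ) * (1 + id s))⁻¹ from funext fun s ↦ one_div _]
  exact h.congr_deriv (by simp only [id, mul_one]; field_simp)

end Branch

lemma measure_eq_measure_Ioo_of_subset {μ : Measure ℝ} (hμ : μ ≪ volume) {a b : ℝ} {s : Set ℝ}
    (h₁ : Ioo a b ⊆ s) (h₂ : s ⊆ Icc a b) : μ s = μ (Ioo a b) :=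
  le_antisymm ((measure_mono h₂).trans_eq (measure_congr (hμ.ae_eq Ioo_ae_eq_Icc).symm))
    (measure_mono h₁)

lemma measure_eq_tsum_inter_preimage_singleton {α β : Type*} [MeasurableSpace α]
    [MeasurableSpace β] [Countable β] [MeasurableSingletonClass β] (μ : Measure α) {f : α → β}
    (hf : Measurable f) {s : Set α} (hs : MeasurableSet s) :
    μ s = ∑' i, μ (s ∩ f ⁻¹' {i}) := by
  rw [← measure_iUnion ((pairwise_disjoint_fiber f).mono fun _ _ h ↦
      h.mono inter_subset_right inter_subset_right)
      fun i ↦ hs.inter (hf (measurableSet_singleton i)), ← inter_iUnion]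
  congr
  ext; simp

lemma component_mass_ratio_bounds {C D c : ℝ} (hC : 0 ≤ C) (hD : 0 < D) (hc : 0 ≤ c)
    {j k : ℕ} (hj : 1 ≤ j) (hjk : j ≤ k) :
    j / (k * (k + 2)) * (c / ((C + D * (j + 1)) * (C + D * j))) ≤
        c * j / ((C * k + D * j * (k + 1)) * (C * (k + 1) + D * j * (k + 2))) ∧
      c * j / ((C * k + D * j * (k + 1)) * (C * (k + 1) + D * j * (k + 2))) ≤
        (j + 1) / (k * (k + 1)) * (c / ((C + D * (j + 1)) * (C + D * j))) := by
  have hj0 : (0 : ℝ) < j := by exact_mod_cast hj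
  have hjk' : (j : ℝ) ≤ k := by exact_mod_cast hjk
  have hk0 : (0 : ℝ) < k := hj0.trans_le hjk'
  set Q₁ := (C + D * (j + 1)) * (C + D * j) with hQ₁_def
  set Q₂ := (C * k + D * j * (k + 1)) * (C * (k + 1) + D * j * (k + 2)) with hQ₂_def
  have hQ₁ : 0 < Q₁ := by positivity
  have hQ₂ : 0 < Q₂ := by positivity
  -- both differences are polynomials in `C, D` with nonnegative coefficients since `j ≤ k`
  have hQ_lower : Q₂ ≤ k * (k + 2) * Q₁ := by
    have h : k * (k + 2) * Q₁ - Q₂ =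
        k * C ^ 2 + (k * (k + 2) - j) * (C * D) + j * (k + 2) * (k - j) * D ^ 2 := by
      rw [hQ₁_def, hQ₂_def]; ring
    have h₀ : 0 ≤ k * C ^ 2 := by positivity
    have h₁ : 0 ≤ (k * (k + 2) - j : ℝ) * (C * D) := mul_nonneg (by nlinarith) (by positivity)
    have h₂ : 0 ≤ j * (k + 2) * (k - j : ℝ) * D ^ 2 := by
      have : (0 : ℝ) ≤ k - j := by linarith
      positivity
    linarith
  have hQ_upper : j * (k * (k + 1)) * Q₁ ≤ (j + 1) * Q₂ := by
    have h : (j + 1) * Q₂ - j * (k * (k + 1)) * Q₁ = k * (k + 1) * C ^ 2 +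
        j * (2 * j * k + j + k ^ 2 + 3 * k + 1) * (C * D) +
        2 * j ^ 2 * (j + 1) * (k + 1) * D ^ 2 := by
      rw [hQ₁_def, hQ₂_def]; ring
    have : 0 ≤ k * (k + 1) * C ^ 2 + j * (2 * j * k + j + k ^ 2 + 3 * k + 1) * (C * D) +
        2 * j ^ 2 * (j + 1) * (k + 1) * D ^ 2 := by
      positivity
    linarith
  constructor
  · rw [div_mul_div_comm, div_le_div_iff₀ (by positivity) hQ₂]
    nlinarith [mul_le_mul_of_nonneg_left hQ_lower (mul_nonneg hj0.le hc)]
  · rw [div_mul_div_comm, div_le_div_iff₀ hQ₂ (by positivity)]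
    nlinarith [mul_le_mul_of_nonneg_left hQ_upper hc]

noncomputable def ecfComponent (b : ℕ) (C D c : ℝ) : Measure ℝ :=
  (volume.restrict (Ioo 0 (1 / (b : ℝ)))).withDensity fun t ↦ ENNReal.ofReal (c / (C * t + D) ^ 2)

section Component

variable {b : ℕ} {C D c : ℝ}

lemma ecfComponent_apply {s : Set ℝ} (hs : MeasurableSet s) :
    ecfComponent b C D c s =
      ∫⁻ t in s ∩ Ioo 0 (1 / (b : ℝ)), ENNReal.ofReal (c / (C * t + D) ^ 2) := by
  rw [ecfComponent, withDensity_apply _ hs, Measure.restrict_restrict hs]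

lemma ecfComponent_absolutelyContinuous : ecfComponent b C D c ≪ volume :=
  (withDensity_absolutelyContinuous _ _).trans
    (Measure.absolutelyContinuous_of_le Measure.restrict_le_self)

lemma ecfComponent_eq_zero_of_disjoint {s : Set ℝ} (hs : Disjoint s (Ioo 0 (1 / (b : ℝ)))) :
    ecfComponent b C D c s = 0 :=
  measure_mono_null (subset_compl_iff_disjoint_right.2 hs) (by
    rw [ecfComponent_apply measurableSet_Ioo.compl, compl_inter_self, Measure.restrict_empty,
      lintegral_zero_measure])

lemma ecfComponent_Ioo (hC : 0 ≤ C) (hD : 0 < D) (hc : 0 ≤ c) {a a' : ℝ} (ha : 0 ≤ a)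
    (haa' : a ≤ a') (ha' : a' ≤ 1 / b) :
    ecfComponent b C D c (Ioo a a') =
      ENNReal.ofReal (c * (a' - a) / ((C * a + D) * (C * a' + D))) := by
  have hpos : ∀ t ∈ Icc a a', 0 < C * t + D := fun t ht ↦ by nlinarith [ht.1]
  have hcont : ContinuousOn (fun t ↦ c / (C * t + D) ^ 2) (Icc a a') :=
    continuousOn_const.div (by fun_prop) fun t ht ↦ (pow_pos (hpos t ht) 2).ne'
  have hderiv : ∀ t ∈ uIcc a a',
      HasDerivAt (fun t ↦ c * t / (D * (C * t + D))) (c / (C * t + D) ^ 2) t := by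
    intro t ht
    rw [uIcc_of_le haa'] at ht
    have h := ((hasDerivAt_id t).const_mul c).div
      (((hasDerivAt_id t).const_mul C).add_const D |>.const_mul D)
      (mul_pos hD (hpos t ht)).ne'
    refine h.congr_deriv ?_
    have := (hpos t ht).ne'
    simp only [id, mul_one]
    field_simp
    ring
  rw [ecfComponent_apply measurableSet_Ioo, inter_eq_left.2 (Ioo_subset_Ioo ha ha'),
    ← ofReal_integral_eq_lintegral_ofReal ((hcont.integrableOn_Icc).mono_set Ioo_subset_Icc_self)
      ((ae_restrict_mem measurableSet_Ioo).mono fun t ht ↦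
        div_nonneg hc (sq_nonneg _)),
    ← integral_Ioc_eq_integral_Ioo, ← intervalIntegral.integral_of_le haa',
    intervalIntegral.integral_eq_sub_of_hasDerivAt hderiv
      (hcont.intervalIntegrable_of_Icc haa')]
  have h1 := (hpos a ⟨le_rfl, haa'⟩).ne'
  have h2 := (hpos a' ⟨haa', le_rfl⟩).ne'
  have := hD.ne'
  congr 1
  rw [div_sub_div _ _ (mul_ne_zero this h2) (mul_ne_zero this h1),
    div_eq_div_iff (by positivity) (mul_ne_zero h1 h2)]
  ring

lemma ecfComponent_setOf_ecfB_one (hb : 1 ≤ b) (hC : 0 ≤ C) (hD : 0 < D) (hc : 0 ≤ c) {j : ℕ}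
    (hbj : b ≤ j) :
    ecfComponent b C D c {y | ecfB 1 y = j} =
      ENNReal.ofReal (c / ((C + D * (j + 1)) * (C + D * j))) := by
  have hb0 : (0 : ℝ) < b := by exact_mod_cast hb
  have hbj' : (b : ℝ) ≤ j := by exact_mod_cast hbj
  have hj0 : (0 : ℝ) < j := hb0.trans_le hbj'
  rw [setOf_ecfB_one_eq (hb.trans hbj), measure_eq_measure_Ioo_of_subset
      ecfComponent_absolutelyContinuous Ioo_subset_Ioc_self Ioc_subset_Icc_self,
    ecfComponent_Ioo hC hD hc (by positivity) (one_div_le_one_div_of_le hj0 (by linarith))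
      (one_div_le_one_div_of_le hb0 hbj')]
  congr 1
  field_simp
  ring

lemma ecfComponent_setOf_ecfB_two_inter (hb : 1 ≤ b) (hC : 0 ≤ C) (hD : 0 < D) (hc : 0 ≤ c)
    {j k : ℕ} (hbj : b ≤ j) (hjk : j ≤ k) :
    ecfComponent b C D c ({y | ecfB 2 y = k} ∩ {y | ecfB 1 y = j}) =
      ENNReal.ofReal (c * j / ((C * k + D * j * (k + 1)) * (C * (k + 1) + D * j * (k + 2)))) := by
  have hb0 : (0 : ℝ) < b := by exact_mod_cast hb
  have hbj' : (b : ℝ) ≤ j := by exact_mod_cast hbj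
  have hjk' : (j : ℝ) ≤ k := by exact_mod_cast hjk
  have hj0 : (0 : ℝ) < j := hb0.trans_le hbj'
  have hk0 : (0 : ℝ) < k := hj0.trans_le hjk'
  rw [measure_eq_measure_Ioo_of_subset ecfComponent_absolutelyContinuous
      (Ioo_subset_setOf_ecfB_two_inter (hb.trans hbj) hjk)
      (setOf_ecfB_two_inter_subset (hb.trans hbj) (hb.trans (hbj.trans hjk))),
    ecfComponent_Ioo hC hD hc (by positivity)
      (by rw [div_le_div_iff₀ (by positivity) (by positivity)]; nlinarith)
      ((div_le_div_iff₀ (by positivity) hb0).2 (by nlinarith))]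
  congr 1
  field_simp
  ring

lemma ecfComponent_cylinder_bounds (hb : 1 ≤ b) (hC : 0 ≤ C) (hD : 0 < D)
    (hc : 0 ≤ c) {j k : ℕ} (hj : 1 ≤ j) (hjk : j ≤ k) :
    (j : ℝ≥0∞) / (k * (k + 2)) * ecfComponent b C D c {y | ecfB 1 y = j} ≤
        ecfComponent b C D c ({y | ecfB 2 y = k} ∩ {y | ecfB 1 y = j}) ∧
      ecfComponent b C D c ({y | ecfB 2 y = k} ∩ {y | ecfB 1 y = j}) ≤
        ((j : ℝ≥0∞) + 1) / (k * (k + 1)) * ecfComponent b C D c {y | ecfB 1 y = j} := by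
  rcases lt_or_ge j b with hjb | hbj
  · have hG : ecfComponent b C D c {y | ecfB 1 y = j} = 0 := by
      refine ecfComponent_eq_zero_of_disjoint ?_
      rw [setOf_ecfB_one_eq hj, Set.disjoint_left]
      rintro y ⟨hy, -⟩ ⟨-, hy'⟩
      have : (1 : ℝ) / b ≤ 1 / (j + 1) :=
        one_div_le_one_div_of_le (by positivity) (by exact_mod_cast hjb)
      linarith
    simp [hG, measure_mono_null inter_subset_right hG]
  have hk0 : (0 : ℝ) < k := by exact_mod_cast hj.trans hjk
  have hlower : (j : ℝ≥0∞) / (k * (k + 2)) = ENNReal.ofReal (j / (k * (k + 2))) := by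
    rw [ENNReal.ofReal_div_of_pos (by positivity)]
    simp [ENNReal.ofReal_mul, ENNReal.ofReal_add]
  have hupper : ((j : ℝ≥0∞) + 1) / (k * (k + 1)) = ENNReal.ofReal ((j + 1) / (k * (k + 1))) := by
    rw [ENNReal.ofReal_div_of_pos (by positivity)]
    simp [ENNReal.ofReal_mul, ENNReal.ofReal_add]
  rw [ecfComponent_setOf_ecfB_one hb hC hD hc hbj,
    ecfComponent_setOf_ecfB_two_inter hb hC hD hc hbj hjk, hlower, hupper,
    ← ENNReal.ofReal_mul (by positivity), ← ENNReal.ofReal_mul (by positivity)]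
  obtain ⟨h₁, h₂⟩ := component_mass_ratio_bounds hC hD hc hj hjk
  exact ⟨ENNReal.ofReal_le_ofReal h₁, ENNReal.ofReal_le_ofReal h₂⟩

lemma ecfComponent_preimage_ecfT_inter (hb : 1 ≤ b) (hC : 0 ≤ C)
    (hD : 0 < D) {j : ℕ} (hbj : b ≤ j) {A : Set ℝ} (hA : MeasurableSet A) :
    ecfComponent b C D c (ecfT ⁻¹' A ∩ {y | ⌊1 / y⌋₊ = j}) =
      ecfComponent j D (D + C / j) (c / j) A := by
  have hj : 1 ≤ j := hb.trans hbj
  have hj0 : (0 : ℝ) < j := by exact_mod_cast hj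
  have hS : MeasurableSet (A ∩ Ioo 0 (1 / (j : ℝ))) := hA.inter measurableSet_Ioo
  have himage : ecfT ⁻¹' A ∩ Ioo (1 / ((j : ℝ) + 1)) (1 / j) =
      ecfBranch j '' (A ∩ Ioo 0 (1 / j)) := by
    rw [(invOn_ecfT_ecfBranch hj).1.image_inter', (bijOn_ecfBranch hj).image_eq]
  have hsupport : Ioo (1 / ((j : ℝ) + 1)) (1 / j) ⊆ Ioo 0 (1 / (b : ℝ)) :=
    fun y hy ↦ ⟨(by positivity : (0 : ℝ) < 1 / (j + 1)).trans hy.1,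
      hy.2.trans_le (one_div_le_one_div_of_le (by exact_mod_cast hb) (by exact_mod_cast hbj))⟩
  have hdensity : EqOn
      (fun t ↦ ENNReal.ofReal |-(1 / (j * (1 + t) ^ 2))| *
        ENNReal.ofReal (c / (C * ecfBranch j t + D) ^ 2))
      (fun t ↦ ENNReal.ofReal (c / j / (D * t + (D + C / j)) ^ 2)) (A ∩ Ioo 0 (1 / j)) := by
    rintro t ⟨-, ht, -⟩
    dsimp only
    rw [abs_neg, abs_of_pos (by positivity), ← ENNReal.ofReal_mul (by positivity), ecfBranch]
    congr 1
    field_simp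
    ring
  calc ecfComponent b C D c (ecfT ⁻¹' A ∩ {y | ⌊1 / y⌋₊ = j})
      = ecfComponent b C D c (ecfT ⁻¹' A ∩ Ioo (1 / ((j : ℝ) + 1)) (1 / j)) := by
        rw [setOf_natFloor_one_div_eq hj]
        exact measure_congr (ecfComponent_absolutelyContinuous.ae_eq
          ((ae_eq_refl _).inter Ioo_ae_eq_Ioc.symm))
    _ = ∫⁻ y in ecfBranch j '' (A ∩ Ioo 0 (1 / j)), ENNReal.ofReal (c / (C * y + D) ^ 2) := by
        rw [ecfComponent_apply ((measurable_ecfT hA).inter measurableSet_Ioo),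
          inter_eq_left.2 (inter_subset_right.trans hsupport), himage]
    _ = ∫⁻ t in A ∩ Ioo 0 (1 / j), ENNReal.ofReal |-(1 / (j * (1 + t) ^ 2))| *
          ENNReal.ofReal (c / (C * ecfBranch j t + D) ^ 2) :=
        lintegral_image_eq_lintegral_abs_deriv_mul hS
          (fun t ht ↦ (hasDerivAt_ecfBranch hj (by linarith [ht.2.1])).hasDerivWithinAt)
          ((bijOn_ecfBranch hj).injOn.mono inter_subset_right) _
    _ = ecfComponent j D (D + C / j) (c / j) A := by
        rw [setLIntegral_congr_fun hS hdensity, ecfComponent_apply hA]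

lemma map_ecfT_ecfComponent (hb : 1 ≤ b) (hC : 0 ≤ C) (hD : 0 < D) :
    (ecfComponent b C D c).map ecfT =
      Measure.sum fun j : Ici b ↦ ecfComponent j D (D + C / j) (c / j) := by
  ext A hA
  rw [Measure.map_apply measurable_ecfT hA, Measure.sum_apply _ hA,
    measure_eq_tsum_inter_preimage_singleton _
      (Nat.measurable_floor.comp (measurable_id.const_div 1) : Measurable fun y : ℝ ↦ ⌊1 / y⌋₊)
      (measurable_ecfT hA),
    tsum_subtype (Ici b) fun j ↦ ecfComponent j D (D + C / j) (c / j) A]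
  congr 1
  funext j
  by_cases hbj : b ≤ j
  · rw [indicator_of_mem (mem_Ici.2 hbj)]
    exact ecfComponent_preimage_ecfT_inter hb hC hD hbj hA
  · rw [indicator_of_notMem (notMem_Ici.2 (not_le.1 hbj))]
    refine ecfComponent_eq_zero_of_disjoint (Set.disjoint_left.2 ?_)
    rintro y ⟨-, hyj⟩ ⟨hy0, hyb⟩
    have hfloor : b ≤ ⌊1 / y⌋₊ :=
      Nat.le_floor ((lt_one_div hy0 (by positivity)).1 hyb).le
    exact hbj (hfloor.trans_eq hyj)

end Component

inductive IsECFMixture : Measure ℝ → Prop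
  | component {b : ℕ} {C D c : ℝ} :
      1 ≤ b → 0 ≤ C → 0 < D → 0 ≤ c → IsECFMixture (ecfComponent b C D c)
  | sum {ι : Type} [Countable ι] {μ : ι → Measure ℝ} :
      (∀ i, IsECFMixture (μ i)) → IsECFMixture (Measure.sum μ)

lemma IsECFMixture.map_ecfT {μ : Measure ℝ} (h : IsECFMixture μ) : IsECFMixture (μ.map ecfT) := by
  induction h with
  | component hb hC hD hc =>
    rw [map_ecfT_ecfComponent hb hC hD]
    exact .sum fun j ↦ .component (hb.trans j.2) hD.le (by positivity) (by positivity)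
  | sum _ ih =>
    rw [Measure.map_sum measurable_ecfT.aemeasurable]
    exact .sum ih

lemma IsECFMixture.cylinder_bounds {μ : Measure ℝ} (h : IsECFMixture μ) {j k : ℕ} (hj : 1 ≤ j)
    (hjk : j ≤ k) :
    (j : ℝ≥0∞) / (k * (k + 2)) * μ {y | ecfB 1 y = j} ≤
        μ ({y | ecfB 2 y = k} ∩ {y | ecfB 1 y = j}) ∧
      μ ({y | ecfB 2 y = k} ∩ {y | ecfB 1 y = j}) ≤
        ((j : ℝ≥0∞) + 1) / (k * (k + 1)) * μ {y | ecfB 1 y = j} := by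
  induction h with
  | component hb hC hD hc => exact ecfComponent_cylinder_bounds hb hC hD hc hj hjk
  | sum _ ih =>
    have hG := measurableSet_setOf_ecfB 1 j
    have hH := (measurableSet_setOf_ecfB 2 k).inter hG
    simp only [Measure.sum_apply _ hG, Measure.sum_apply _ hH, ← ENNReal.tsum_mul_left]
    exact ⟨ENNReal.tsum_le_tsum fun i ↦ (ih i).1, ENNReal.tsum_le_tsum fun i ↦ (ih i).2⟩

lemma ecfP_eq_ecfComponent : ecfP = ecfComponent 1 0 1 1 := by
  rw [ecfP, ecfComponent]
  simp only [Nat.cast_one, div_one, zero_mul, zero_add, one_pow, ENNReal.ofReal_one]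
  rw [withDensity_const, one_smul]
  exact (Measure.restrict_congr_set Ioo_ae_eq_Ioc).symm

lemma isECFMixture_map_iterate_ecfT (n : ℕ) : IsECFMixture (ecfP.map ecfT^[n]) := by
  induction n with
  | zero =>
    rw [Function.iterate_zero, Measure.map_id, ecfP_eq_ecfComponent]
    exact .component le_rfl le_rfl one_pos zero_le_one
  | succ n ih =>
    rw [Function.iterate_succ', ← Measure.map_map measurable_ecfT (measurable_ecfT.iterate n)]
    exact ih.map_ecfT

instance isFiniteMeasure_ecfP : IsFiniteMeasure ecfP := by
  rw [ecfP]
  infer_instance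

lemma ecfP_setOf_ecfB_one {j : ℕ} (hj : 1 ≤ j) :
    ecfP {x | ecfB 1 x = j} = ((j : ℝ≥0∞) * (j + 1))⁻¹ := by
  rw [ecfP_eq_ecfComponent, ecfComponent_setOf_ecfB_one le_rfl le_rfl one_pos zero_le_one hj,
    show (1 : ℝ) / ((0 + 1 * (j + 1)) * (0 + 1 * j)) = ((j : ℝ) * (j + 1))⁻¹ by ring,
    ENNReal.ofReal_inv_of_pos (by positivity)]
  simp [ENNReal.ofReal_mul, ENNReal.ofReal_add]

lemma ecfP_cylinder_bounds {j k n : ℕ} (hj : 1 ≤ j) (hjk : j ≤ k) (hn : 1 ≤ n) :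
    (j : ℝ≥0∞) / (k * (k + 2)) * ecfP {x | ecfB n x = j} ≤
        ecfP ({x | ecfB (n + 1) x = k} ∩ {x | ecfB n x = j}) ∧
      ecfP ({x | ecfB (n + 1) x = k} ∩ {x | ecfB n x = j}) ≤
        ((j : ℝ≥0∞) + 1) / (k * (k + 1)) * ecfP {x | ecfB n x = j} := by
  obtain ⟨m, rfl⟩ : ∃ m, n = 1 + m := ⟨n - 1, by omega⟩
  have hmap : ∀ s, MeasurableSet s → ecfP (ecfT^[m] ⁻¹' s) = ecfP.map ecfT^[m] s :=
    fun s hs ↦ (Measure.map_apply (measurable_ecfT.iterate m) hs).symm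
  rw [show 1 + m + 1 = 2 + m by omega, setOf_ecfB_add_eq_preimage m le_rfl,
    setOf_ecfB_add_eq_preimage m one_le_two, ← preimage_inter,
    hmap _ (measurableSet_setOf_ecfB 1 j),
    hmap _ ((measurableSet_setOf_ecfB 2 k).inter (measurableSet_setOf_ecfB 1 j))]
  exact (isECFMixture_map_iterate_ecfT m).cylinder_bounds hj hjk

lemma ecfP_setOf_ecfB_ne_zero {n j : ℕ} (hn : 1 ≤ n) (hj : 1 ≤ j) :
    ecfP {x | ecfB n x = j} ≠ 0 := by
  induction n, hn using Nat.le_induction generalizing j with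
  | base => simp [ecfP_setOf_ecfB_one hj, ENNReal.mul_eq_top]
  | succ n hn ih =>
    -- `P(b_{n+1} = j) ≥ P(b_{n+1} = j, b_n = 1) ≥ P(b_n = 1) / (j (j + 2))`
    refine (lt_of_lt_of_le ?_ (((ecfP_cylinder_bounds le_rfl hj hn).1).trans
      (measure_mono inter_subset_left))).ne'
    refine ENNReal.mul_pos ?_ (ih le_rfl)
    simp [ENNReal.mul_eq_top]

/-- Near-Markov property of ECF partial quotients: `P(b_1 = j) = 1/(j(j+1))`, and for
`k ≥ j ≥ 1` and `n ≥ 1`, `j/(k(k+2)) ≤ P(b_{n+1} = k | b_n = j) ≤ (j+1)/(k(k+1))`. -/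
theorem ecf_near_markov :
    (∀ j : ℕ, 1 ≤ j → ecfP {x | ecfB 1 x = (j : ℤ)} = ((j : ENNReal) * (j + 1))⁻¹) ∧
    (∀ j k : ℕ, 1 ≤ j → j ≤ k → ∀ n : ℕ, 1 ≤ n →
      (j : ENNReal) / ((k : ENNReal) * (k + 2)) ≤
        ecfP ({x | ecfB (n + 1) x = (k : ℤ)} ∩ {x | ecfB n x = (j : ℤ)}) /
          ecfP {x | ecfB n x = (j : ℤ)} ∧
      ecfP ({x | ecfB (n + 1) x = (k : ℤ)} ∩ {x | ecfB n x = (j : ℤ)}) /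
          ecfP {x | ecfB n x = (j : ℤ)} ≤
        ((j : ENNReal) + 1) / ((k : ENNReal) * (k + 1))) := by
  refine ⟨fun j hj ↦ ecfP_setOf_ecfB_one hj, fun j k hj hjk n hn ↦ ?_⟩
  have hpos := ecfP_setOf_ecfB_ne_zero hn hj
  have hfin := measure_ne_top ecfP {x | ecfB n x = j}
  obtain ⟨hlower, hupper⟩ := ecfP_cylinder_bounds hj hjk hn
  exact ⟨(ENNReal.le_div_iff_mul_le (.inl hpos) (.inl hfin)).2 hlower,
    (ENNReal.div_le_iff_le_mul (.inl hpos) (.inl hfin)).2 hupper⟩
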